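/- arXiv:2209.05693 — 3 statements merged into one kernel-verified Lean document; each statement's English description precedes it below -/
import Mathlib

section
/- Let $Q$ be an LD-quantale. Then for $Q$-relations $R: W\to X$, $S: X\to Y$, $T: Y\to Z$ with $(R\otimes S)(w,y)=\bigvee_x R(w,x)\otimes S(x,y)$ and $(S\oplus T)(x,z)=\bigwedge_y S(x,y)\oplus T(y,z)$, the linear distributivity $R\otimes(S\oplus T) \le (R\otimes S)\oplus T$ holds pointwise. -/
/-- Composition of `Q`-relations: `(R ⊗ S)(w,y) = ⋁_x R(w,x) ⊗ S(x,y)`. -/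
def rcomp {Q : Type*} [CompleteLattice Q] (mul : Q → Q → Q)
    {X Y Z : Type*} (f : X → Y → Q) (g : Y → Z → Q) : X → Z → Q :=
  fun x z => ⨆ y, mul (f x y) (g y z)

/-- Second composition of `Q`-relations: `(S ⊕ T)(x,z) = ⋀_y S(x,y) ⊕ T(y,z)`. -/
def pcomp {Q : Type*} [CompleteLattice Q] (oplus : Q → Q → Q)
    {X Y Z : Type*} (f : X → Y → Q) (g : Y → Z → Q) : X → Z → Q :=
  fun x z => ⨅ y, oplus (f x y) (g y z)

/-- For an LD-quantale `Q`, the linear distributivity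
`R ⊗ (S ⊕ T) ≤ (R ⊗ S) ⊕ T` holds pointwise for `Q`-relations. -/
theorem QRel_linear_distributivity {Q : Type*} [CompleteLattice Q]
    (mul : Q → Q → Q) (oplus : Q → Q → Q)
    (hmassoc : ∀ a b c : Q, mul (mul a b) c = mul a (mul b c))
    (hsupl : ∀ (P : Set Q) (a : Q), mul (sSup P) a = ⨆ p ∈ P, mul p a)
    (hsupr : ∀ (P : Set Q) (a : Q), mul a (sSup P) = ⨆ p ∈ P, mul a p)
    (e : Q) (hel : ∀ a, mul e a = a) (her : ∀ a, mul a e = a)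
    (hpassoc : ∀ a b c : Q, oplus (oplus a b) c = oplus a (oplus b c))
    (hinfl : ∀ (P : Set Q) (a : Q), oplus (sInf P) a = ⨅ p ∈ P, oplus p a)
    (hinfr : ∀ (P : Set Q) (a : Q), oplus a (sInf P) = ⨅ p ∈ P, oplus a p)
    (d : Q) (hdl : ∀ a, oplus d a = a) (hdr : ∀ a, oplus a d = a)
    (hld1 : ∀ a b c : Q, mul a (oplus b c) ≤ oplus (mul a b) c)
    (hld2 : ∀ a b c : Q, mul (oplus b c) a ≤ oplus b (mul c a)) :
    ∀ (W X Y Z : Type) (R : W → X → Q) (S : X → Y → Q) (T : Y → Z → Q),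
      ∀ w z, rcomp mul R (pcomp oplus S T) w z ≤ pcomp oplus (rcomp mul R S) T w z := by
  have hmulmono : ∀ a b c : Q, b ≤ c → mul a b ≤ mul a c := by
    intro a b c hbc
    have : mul a (sSup {b, c}) = ⨆ p ∈ ({b, c} : Set Q), mul a p := hsupr _ _
    have hs : sSup ({b, c} : Set Q) = c := by
      simp [sSup_pair, sup_eq_right.mpr hbc]
    rw [hs] at this
    rw [this]
    exact le_biSup _ (by simp)
  have hoplmono : ∀ a b c : Q, a ≤ b → oplus a c ≤ oplus b c := by
    intro a b c hab
    have : oplus (sInf {a, b}) c = ⨅ p ∈ ({a, b} : Set Q), oplus p c := hinfl _ _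
    have hs : sInf ({a, b} : Set Q) = a := by
      simp [sInf_pair, inf_eq_left.mpr hab]
    rw [hs] at this
    rw [this]
    exact biInf_le _ (by simp : b ∈ ({a, b} : Set Q))
  intro W X Y Z R S T w z
  simp only [rcomp, pcomp]
  refine iSup_le fun x => le_iInf fun y => ?_
  calc mul (R w x) (⨅ y', oplus (S x y') (T y' z))
      ≤ mul (R w x) (oplus (S x y) (T y z)) := hmulmono _ _ _ (iInf_le _ y)
    _ ≤ oplus (mul (R w x) (S x y)) (T y z) := hld1 _ _ _
    _ ≤ oplus (⨆ x', mul (R w x') (S x' y)) (T y z) :=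
        hoplmono _ _ _ (le_iSup (fun x' => mul (R w x') (S x' y)) x)
end

section
/- Let $Q$ be an LD-quantale and suppose the pointwise linear distributivity $R\otimes(S\oplus T) \le (R\otimes S)\oplus T$ holds in $Q\text{-Rel}$ for all relations on a one-element set. Then the distributivity $a\otimes(b\oplus c)\le(a\otimes b)\oplus c$ holds in $Q$; conversely, if $Q$ satisfies both linear distributivities then so does $Q\text{-Rel}$ pointwise (in both forms). -/
/-- Linear distributivity transfers between `Q` and `Q`-Rel: distributivity for
relations on a one-element set yields distributivity in `Q`, and conversely
distributivity in `Q` yields both pointwise distributivities for all relations. -/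
theorem QRel_distributivity_iff {Q : Type*} [CompleteLattice Q]
    (mul : Q → Q → Q) (oplus : Q → Q → Q)
    (hmassoc : ∀ a b c : Q, mul (mul a b) c = mul a (mul b c))
    (hsupl : ∀ (P : Set Q) (a : Q), mul (sSup P) a = ⨆ p ∈ P, mul p a)
    (hsupr : ∀ (P : Set Q) (a : Q), mul a (sSup P) = ⨆ p ∈ P, mul a p)
    (e : Q) (hel : ∀ a, mul e a = a) (her : ∀ a, mul a e = a)
    (hpassoc : ∀ a b c : Q, oplus (oplus a b) c = oplus a (oplus b c))
    (hinfl : ∀ (P : Set Q) (a : Q), oplus (sInf P) a = ⨅ p ∈ P, oplus p a)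
    (hinfr : ∀ (P : Set Q) (a : Q), oplus a (sInf P) = ⨅ p ∈ P, oplus a p)
    (d : Q) (hdl : ∀ a, oplus d a = a) (hdr : ∀ a, oplus a d = a) :
    ((∀ (R S T : PUnit → PUnit → Q) (w z : PUnit),
        rcomp mul R (pcomp oplus S T) w z ≤ pcomp oplus (rcomp mul R S) T w z) →
      ∀ a b c : Q, mul a (oplus b c) ≤ oplus (mul a b) c) ∧
    (((∀ a b c : Q, mul a (oplus b c) ≤ oplus (mul a b) c) ∧
      (∀ a b c : Q, mul (oplus b c) a ≤ oplus b (mul c a))) →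
      ∀ (W X Y Z : Type) (R : W → X → Q) (S : X → Y → Q) (T : Y → Z → Q),
        (∀ w z, rcomp mul R (pcomp oplus S T) w z ≤ pcomp oplus (rcomp mul R S) T w z) ∧
        (∀ w z, rcomp mul (pcomp oplus R S) T w z ≤ pcomp oplus R (rcomp mul S T) w z)) := by
  -- monotonicity lemmas
  have hmul_l : ∀ {a b : Q} (c : Q), a ≤ b → mul a c ≤ mul b c := by
    intro a b c h
    have h1 : sSup ({a, b} : Set Q) = b := by
      rw [sSup_pair, sup_eq_right.mpr h]
    calc mul a c ≤ ⨆ p ∈ ({a, b} : Set Q), mul p c :=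
          le_iSup₂ (f := fun p (_ : p ∈ ({a,b}:Set Q)) => mul p c) a (by simp)
      _ = mul (sSup {a, b}) c := (hsupl _ _).symm
      _ = mul b c := by rw [h1]
  have hmul_r : ∀ {a b : Q} (c : Q), a ≤ b → mul c a ≤ mul c b := by
    intro a b c h
    have h1 : sSup ({a, b} : Set Q) = b := by
      rw [sSup_pair, sup_eq_right.mpr h]
    calc mul c a ≤ ⨆ p ∈ ({a, b} : Set Q), mul c p :=
          le_iSup₂ (f := fun p (_ : p ∈ ({a,b}:Set Q)) => mul c p) a (by simp)
      _ = mul c (sSup {a, b}) := (hsupr _ _).symm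
      _ = mul c b := by rw [h1]
  have hop_l : ∀ {a b : Q} (c : Q), a ≤ b → oplus a c ≤ oplus b c := by
    intro a b c h
    have h1 : sInf ({a, b} : Set Q) = a := by
      rw [sInf_pair, inf_eq_left.mpr h]
    calc oplus a c = oplus (sInf {a, b}) c := by rw [h1]
      _ = ⨅ p ∈ ({a, b} : Set Q), oplus p c := hinfl _ _
      _ ≤ oplus b c :=
          iInf₂_le (f := fun p (_ : p ∈ ({a,b}:Set Q)) => oplus p c) b (by simp)
  have hop_r : ∀ {a b : Q} (c : Q), a ≤ b → oplus c a ≤ oplus c b := by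
    intro a b c h
    have h1 : sInf ({a, b} : Set Q) = a := by
      rw [sInf_pair, inf_eq_left.mpr h]
    calc oplus c a = oplus c (sInf {a, b}) := by rw [h1]
      _ = ⨅ p ∈ ({a, b} : Set Q), oplus c p := hinfr _ _
      _ ≤ oplus c b :=
          iInf₂_le (f := fun p (_ : p ∈ ({a,b}:Set Q)) => oplus c p) b (by simp)
  constructor
  · intro h a b c
    have := h (fun _ _ => a) (fun _ _ => b) (fun _ _ => c) PUnit.unit PUnit.unit
    simpa [rcomp, pcomp] using this
  · rintro ⟨h1, h2⟩ W X Y Z R S T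
    constructor
    · intro w z
      simp only [rcomp, pcomp]
      refine le_iInf fun y => iSup_le fun x => ?_
      calc mul (R w x) (⨅ y', oplus (S x y') (T y' z))
            ≤ mul (R w x) (oplus (S x y) (T y z)) := hmul_r _ (iInf_le _ y)
        _ ≤ oplus (mul (R w x) (S x y)) (T y z) := h1 _ _ _
        _ ≤ oplus (⨆ x', mul (R w x') (S x' y)) (T y z) := hop_l _ (le_iSup (fun x' => mul (R w x') (S x' y)) x)
    · intro w z
      simp only [rcomp, pcomp]
      refine le_iInf fun x => iSup_le fun y => ?_
      calc mul (⨅ x', oplus (R w x') (S x' y)) (T y z)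
            ≤ mul (oplus (R w x) (S x y)) (T y z) := hmul_l _ (iInf_le _ x)
        _ ≤ oplus (R w x) (mul (S x y) (T y z)) := h2 _ _ _
        _ ≤ oplus (R w x) (⨆ y', mul (S x y') (T y' z)) := hop_r _ (le_iSup (fun y' => mul (S x y') (T y' z)) y)
end

section
/- Let $M$ be a commutative cancellative monoid with unit $\top$ and a distinguished invertible element $a$, with shifted multiplication $x \cdot y = x + y - a$ (unit $a$). Extend both operations to $M^+ = M\cup\{\mathbf{0},\mathbf{1}\}$ dually ($\mathbf{1}$ absorbing for $+$ except on $\mathbf{0}$, $\mathbf{0}$ absorbing everywhere for $+$; $\mathbf{0}$ absorbing for $\cdot$ except on $\mathbf{1}$, $\mathbf{1}$ absorbing everywhere for $\cdot$). Then $M^+$ is an LD-quantale: $(M^+,+,\top)$ and $((M^+)^{op},\cdot,a)$ are unital quantales and $x+(y\cdot z) \le (x+y)\cdot z$ and $(y\cdot z)+x \le y\cdot(z+x)$ hold. -/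
/-- A cancellative commutative shift monoid `(M, +, 0, a)` with `a` invertible
(`a + na = 0`) and shifted multiplication `x ⬝ y = x + y - a = x + y + na`,
extended to `M⁺` (`M` discrete with bottom `𝟎` and top `𝟏` adjoined) dually:
`𝟏` absorbing for `+` except on `𝟎`, `𝟎` absorbing everywhere for `+`;
`𝟎` absorbing for `⬝` except on `𝟏`, `𝟏` absorbing everywhere for `⬝`.
Then `M⁺` is an LD-quantale: `(M⁺, +, 0)` is a sup-preserving unital quantale,
`((M⁺)ᵒᵖ, ⬝, a)` is an inf-preserving unital quantale, and the two linear
distributivities hold. -/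
theorem Mplus_shift_LD_quantale {M : Type*} [AddCommMonoid M]
    (hcanc : ∀ a b c : M, a + b = a + c → b = c)
    (a na : M) (hinv : a + na = 0)
    {L : Type*} [CompleteLattice L] (i : M → L)
    (hinj : Function.Injective i)
    (horder : ∀ x y : L, x ≤ y ↔ x = ⊥ ∨ y = ⊤ ∨ x = y)
    (hcover : ∀ x : L, x = ⊥ ∨ x = ⊤ ∨ ∃ m : M, x = i m)
    (hbt : (⊥ : L) ≠ ⊤) (hm : ∀ m : M, i m ≠ ⊥ ∧ i m ≠ ⊤)
    (add : L → L → L)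
    (haddM : ∀ m n : M, add (i m) (i n) = i (m + n))
    (htopl : ∀ b : L, b ≠ ⊥ → add ⊤ b = ⊤) (htopr : ∀ b : L, b ≠ ⊥ → add b ⊤ = ⊤)
    (hbotl : ∀ b : L, add ⊥ b = ⊥) (hbotr : ∀ b : L, add b ⊥ = ⊥)
    (mul2 : L → L → L)
    (hmulM : ∀ m n : M, mul2 (i m) (i n) = i (m + n + na))
    (hbotl2 : ∀ b : L, b ≠ ⊤ → mul2 ⊥ b = ⊥) (hbotr2 : ∀ b : L, b ≠ ⊤ → mul2 b ⊥ = ⊥)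
    (htopl2 : ∀ b : L, mul2 ⊤ b = ⊤) (htopr2 : ∀ b : L, mul2 b ⊤ = ⊤) :
    -- `(M⁺, +, i 0)` is a unital quantale:
    (∀ x y z : L, add (add x y) z = add x (add y z)) ∧
    (∀ x : L, add x (i 0) = x ∧ add (i 0) x = x) ∧
    (∀ (P : Set L) (x : L), add (sSup P) x = ⨆ p ∈ P, add p x) ∧
    (∀ (P : Set L) (x : L), add x (sSup P) = ⨆ p ∈ P, add x p) ∧
    -- `((M⁺)ᵒᵖ, ⬝, i a)` is a unital quantale:
    (∀ x y z : L, mul2 (mul2 x y) z = mul2 x (mul2 y z)) ∧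
    (∀ x : L, mul2 x (i a) = x ∧ mul2 (i a) x = x) ∧
    (∀ (P : Set L) (x : L), mul2 (sInf P) x = ⨅ p ∈ P, mul2 p x) ∧
    (∀ (P : Set L) (x : L), mul2 x (sInf P) = ⨅ p ∈ P, mul2 x p) ∧
    -- linear distributivities:
    (∀ x y z : L, add x (mul2 y z) ≤ mul2 (add x y) z) ∧
    (∀ x y z : L, add (mul2 y z) x ≤ mul2 y (add z x)) := by

  have htb : (⊤ : L) ≠ ⊥ := Ne.symm hbt
  have htt : add ⊤ ⊤ = ⊤ := htopl ⊤ htb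
  have htm : ∀ m : M, add ⊤ (i m) = ⊤ := fun m => htopl _ (hm m).1
  have hmt : ∀ m : M, add (i m) ⊤ = ⊤ := fun m => htopr _ (hm m).1
  have hbb2 : mul2 ⊥ ⊥ = ⊥ := hbotl2 ⊥ hbt
  have hbm2 : ∀ m : M, mul2 ⊥ (i m) = ⊥ := fun m => hbotl2 _ (hm m).2
  have hmb2 : ∀ m : M, mul2 (i m) ⊥ = ⊥ := fun m => hbotr2 _ (hm m).2
  have hcancM : ∀ m n k : M, m + k = n + k → m = n := fun m n k h =>
    hcanc k m n (by rw [add_comm k m, add_comm k n]; exact h)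
  have hiM : ∀ m n : M, m = n → i m = i n := fun m n h => congrArg i h
  have two_sup : ∀ u v z : L, u ≠ ⊥ → v ≠ ⊥ → u ≠ v → u ≤ z → v ≤ z → z = ⊤ := by
    intro u v z hu hv huv h1 h2
    rcases (horder u z).1 h1 with h | h | h
    · exact absurd h hu
    · exact h
    · rcases (horder v z).1 h2 with h' | h' | h'
      · exact absurd h' hv
      · exact h'
      · exact absurd (h.trans h'.symm) huv
  have two_inf : ∀ u v z : L, u ≠ ⊤ → v ≠ ⊤ → u ≠ v → z ≤ u → z ≤ v → z = ⊥ := by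
    intro u v z hu hv huv h1 h2
    rcases (horder z u).1 h1 with h | h | h
    · exact h
    · exact absurd h hu
    · rcases (horder z v).1 h2 with h' | h' | h'
      · exact h'
      · exact absurd h' hv
      · exact absurd (h.symm.trans h') huv
  have key_sup : ∀ f : L → L, f ⊥ = ⊥ → f ⊤ = ⊤ →
      (∀ u v : L, u ≠ ⊥ → v ≠ ⊥ → u ≠ v →
        f u = ⊤ ∨ f v = ⊤ ∨ (f u ≠ ⊥ ∧ f v ≠ ⊥ ∧ f u ≠ f v)) →
      ∀ P : Set L, f (sSup P) = ⨆ p ∈ P, f p := by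
    intro f hfb hft hpair P
    by_cases hA : ∀ p ∈ P, p = ⊥
    · have h1 : sSup P = ⊥ := le_bot_iff.1 (sSup_le fun p hp => (hA p hp).le)
      rw [h1, hfb]
      exact (le_bot_iff.1 (iSup₂_le fun p hp => by rw [hA p hp, hfb])).symm
    · push_neg at hA
      obtain ⟨q, hqP, hq⟩ := hA
      by_cases hB : ∀ p ∈ P, p = ⊥ ∨ p = q
      · have h1 : sSup P = q := by
          refine le_antisymm (sSup_le fun p hp => ?_) (le_sSup hqP)
          rcases hB p hp with h | h
          · rw [h]; exact bot_le
          · rw [h]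
        rw [h1]
        refine le_antisymm (le_biSup f hqP) (iSup₂_le fun p hp => ?_)
        rcases hB p hp with h | h
        · rw [h, hfb]; exact bot_le
        · rw [h]
      · push_neg at hB
        obtain ⟨v, hvP, hv1, hv2⟩ := hB
        have h1 : sSup P = ⊤ :=
          two_sup q v (sSup P) hq hv1 (Ne.symm hv2) (le_sSup hqP) (le_sSup hvP)
        rw [h1, hft]
        refine (top_le_iff.1 ?_).symm
        rcases hpair q v hq hv1 (Ne.symm hv2) with h | h | ⟨h1', h2', h3'⟩
        · exact h ▸ le_biSup f hqP
        · exact h ▸ le_biSup f hvP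
        · exact (two_sup (f q) (f v) _ h1' h2' h3' (le_biSup f hqP) (le_biSup f hvP)).ge
  have key_inf : ∀ f : L → L, f ⊤ = ⊤ → f ⊥ = ⊥ →
      (∀ u v : L, u ≠ ⊤ → v ≠ ⊤ → u ≠ v →
        f u = ⊥ ∨ f v = ⊥ ∨ (f u ≠ ⊤ ∧ f v ≠ ⊤ ∧ f u ≠ f v)) →
      ∀ P : Set L, f (sInf P) = ⨅ p ∈ P, f p := by
    intro f hft hfb hpair P
    by_cases hA : ∀ p ∈ P, p = ⊤
    · have h1 : sInf P = ⊤ := top_le_iff.1 (le_sInf fun p hp => (hA p hp).ge)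
      rw [h1, hft]
      refine le_antisymm (le_iInf₂ fun p hp => by rw [hA p hp, hft]) le_top
    · push_neg at hA
      obtain ⟨q, hqP, hq⟩ := hA
      by_cases hB : ∀ p ∈ P, p = ⊤ ∨ p = q
      · have h1 : sInf P = q := by
          refine le_antisymm (sInf_le hqP) (le_sInf fun p hp => ?_)
          rcases hB p hp with h | h
          · rw [h]; exact le_top
          · rw [h]
        rw [h1]
        refine le_antisymm (le_iInf₂ fun p hp => ?_) (biInf_le f hqP)
        rcases hB p hp with h | h
        · rw [h, hft]; exact le_top
        · rw [h]
      · push_neg at hB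
        obtain ⟨v, hvP, hv1, hv2⟩ := hB
        have h1 : sInf P = ⊥ :=
          two_inf q v (sInf P) hq hv1 (Ne.symm hv2) (sInf_le hqP) (sInf_le hvP)
        rw [h1, hfb]
        refine le_antisymm bot_le ?_
        rcases hpair q v hq hv1 (Ne.symm hv2) with h | h | ⟨h1', h2', h3'⟩
        · exact h ▸ biInf_le f hqP
        · exact h ▸ biInf_le f hvP
        · exact (two_inf (f q) (f v) _ h1' h2' h3' (biInf_le f hqP) (biInf_le f hvP)).le
  refine ⟨?_, ?_, ?_, ?_, ?_, ?_, ?_, ?_, ?_, ?_⟩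
  · -- associativity of add
    intro x y z
    obtain rfl | rfl | ⟨m, rfl⟩ := hcover x <;>
      obtain rfl | rfl | ⟨n, rfl⟩ := hcover y <;>
        obtain rfl | rfl | ⟨k, rfl⟩ := hcover z <;>
          simp [hbotl, hbotr, htt, htm, hmt, haddM, add_assoc, add_comm, add_left_comm]
  · -- unit of add
    intro x
    obtain rfl | rfl | ⟨m, rfl⟩ := hcover x <;>
      simp [hbotl, hbotr, htt, htm, hmt, haddM]
  · -- sSup distributivity (left)
    intro P x
    obtain rfl | rfl | ⟨k, rfl⟩ := hcover x
    · have h2 : (⨆ p ∈ P, add p ⊥) = ⊥ := le_bot_iff.1 (iSup₂_le fun p _ => (hbotr p).le)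
      rw [hbotr, h2]
    · refine key_sup (fun p => add p ⊤) (hbotl ⊤) htt ?_ P
      intro u v hu hv huv
      obtain rfl | rfl | ⟨m, rfl⟩ := hcover u
      · exact absurd rfl hu
      · exact Or.inl htt
      · exact Or.inl (hmt m)
    · refine key_sup (fun p => add p (i k)) (hbotl _) (htm k) ?_ P
      intro u v hu hv huv
      obtain rfl | rfl | ⟨m, rfl⟩ := hcover u
      · exact absurd rfl hu
      · exact Or.inl (htm k)
      · obtain rfl | rfl | ⟨n, rfl⟩ := hcover v
        · exact absurd rfl hv
        · exact Or.inr (Or.inl (htm k))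
        · refine Or.inr (Or.inr ?_)
          simp only [haddM]
          exact ⟨(hm _).1, (hm _).1, fun h => huv (hiM _ _ (hcancM m n k (hinj h)))⟩
  · -- sSup distributivity (right)
    intro P x
    obtain rfl | rfl | ⟨k, rfl⟩ := hcover x
    · have h2 : (⨆ p ∈ P, add ⊥ p) = ⊥ := le_bot_iff.1 (iSup₂_le fun p _ => (hbotl p).le)
      rw [hbotl, h2]
    · refine key_sup (fun p => add ⊤ p) (hbotr ⊤) htt ?_ P
      intro u v hu hv huv
      obtain rfl | rfl | ⟨m, rfl⟩ := hcover u
      · exact absurd rfl hu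
      · exact Or.inl htt
      · exact Or.inl (htm m)
    · refine key_sup (fun p => add (i k) p) (hbotr _) (hmt k) ?_ P
      intro u v hu hv huv
      obtain rfl | rfl | ⟨m, rfl⟩ := hcover u
      · exact absurd rfl hu
      · exact Or.inl (hmt k)
      · obtain rfl | rfl | ⟨n, rfl⟩ := hcover v
        · exact absurd rfl hv
        · exact Or.inr (Or.inl (hmt k))
        · refine Or.inr (Or.inr ?_)
          simp only [haddM]
          refine ⟨(hm _).1, (hm _).1, fun h => huv (hiM _ _ ?_)⟩
          exact hcanc k m n (hinj h)
  · -- associativity of mul2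
    intro x y z
    obtain rfl | rfl | ⟨m, rfl⟩ := hcover x <;>
      obtain rfl | rfl | ⟨n, rfl⟩ := hcover y <;>
        obtain rfl | rfl | ⟨k, rfl⟩ := hcover z <;>
          simp [hbb2, hbm2, hmb2, htopl2, htopr2, hmulM, add_assoc, add_comm, add_left_comm]
  · -- unit of mul2
    intro x
    have ha0 : ∀ m : M, m + a + na = m := fun m => by
      rw [add_assoc, hinv, add_zero]
    have ha0' : ∀ m : M, a + m + na = m := fun m => by
      rw [add_comm a m, add_assoc, hinv, add_zero]
    obtain rfl | rfl | ⟨m, rfl⟩ := hcover x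
    · exact ⟨hbm2 a, hmb2 a⟩
    · exact ⟨htopl2 _, htopr2 _⟩
    · rw [hmulM, hmulM, ha0, ha0']; exact ⟨rfl, rfl⟩
  · -- sInf distributivity (left)
    intro P x
    obtain rfl | rfl | ⟨k, rfl⟩ := hcover x
    · refine key_inf (fun p => mul2 p ⊥) (htopl2 ⊥) hbb2 ?_ P
      intro u v hu hv huv
      obtain rfl | rfl | ⟨m, rfl⟩ := hcover u
      · exact Or.inl hbb2
      · exact absurd rfl hu
      · exact Or.inl (hmb2 m)
    · have h2 : (⨅ p ∈ P, mul2 p ⊤) = ⊤ := top_le_iff.1 (le_iInf₂ fun p _ => (htopr2 p).ge)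
      rw [htopr2, h2]
    · refine key_inf (fun p => mul2 p (i k)) (htopl2 _) (hbm2 k) ?_ P
      intro u v hu hv huv
      obtain rfl | rfl | ⟨m, rfl⟩ := hcover u
      · exact Or.inl (hbm2 k)
      · exact absurd rfl hu
      · obtain rfl | rfl | ⟨n, rfl⟩ := hcover v
        · exact Or.inr (Or.inl (hbm2 k))
        · exact absurd rfl hv
        · refine Or.inr (Or.inr ?_)
          simp only [hmulM]
          refine ⟨(hm _).2, (hm _).2, fun h => huv (hiM _ _ ?_)⟩
          have := hinj h
          rw [add_assoc m k na, add_assoc n k na] at this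
          exact hcancM m n (k + na) this
  · -- sInf distributivity (right)
    intro P x
    obtain rfl | rfl | ⟨k, rfl⟩ := hcover x
    · refine key_inf (fun p => mul2 ⊥ p) (htopr2 ⊥) hbb2 ?_ P
      intro u v hu hv huv
      obtain rfl | rfl | ⟨m, rfl⟩ := hcover u
      · exact Or.inl hbb2
      · exact absurd rfl hu
      · exact Or.inl (hbm2 m)
    · have h2 : (⨅ p ∈ P, mul2 ⊤ p) = ⊤ := top_le_iff.1 (le_iInf₂ fun p _ => (htopl2 p).ge)
      rw [htopl2, h2]
    · refine key_inf (fun p => mul2 (i k) p) (htopr2 _) (hmb2 k) ?_ P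
      intro u v hu hv huv
      obtain rfl | rfl | ⟨m, rfl⟩ := hcover u
      · exact Or.inl (hmb2 k)
      · exact absurd rfl hu
      · obtain rfl | rfl | ⟨n, rfl⟩ := hcover v
        · exact Or.inr (Or.inl (hmb2 k))
        · exact absurd rfl hv
        · refine Or.inr (Or.inr ?_)
          simp only [hmulM]
          refine ⟨(hm _).2, (hm _).2, fun h => huv (hiM _ _ ?_)⟩
          have := hinj h
          rw [add_comm k m, add_comm k n, add_assoc m k na, add_assoc n k na] at this
          exact hcancM m n (k + na) this
  · -- linear distributivity 1
    intro x y z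
    obtain rfl | rfl | ⟨m, rfl⟩ := hcover x <;>
      obtain rfl | rfl | ⟨n, rfl⟩ := hcover y <;>
        obtain rfl | rfl | ⟨k, rfl⟩ := hcover z <;>
          simp [hbotl, hbotr, htt, htm, hmt, haddM, hbb2, hbm2, hmb2, htopl2, htopr2,
            hmulM, add_assoc, add_comm, add_left_comm]
  · -- linear distributivity 2
    intro x y z
    obtain rfl | rfl | ⟨m, rfl⟩ := hcover x <;>
      obtain rfl | rfl | ⟨n, rfl⟩ := hcover y <;>
        obtain rfl | rfl | ⟨k, rfl⟩ := hcover z <;>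
          simp [hbotl, hbotr, htt, htm, hmt, haddM, hbb2, hbm2, hmb2, htopl2, htopr2,
            hmulM, add_assoc, add_comm, add_left_comm]
end
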